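/- Let $k \ge 1$ and let $V$ be the set of variables $\{y_W : W \in S(\overline{C_{2k+1}})\}$. There is no function $w : V \to \mathbb{R}$ satisfying all of the following strict inequalities simultaneously: $w(y_{\{2i-1\}}) + w(y_{\{2i,2i+1\}}) < w(y_{\{2i+1\}}) + w(y_{\{2i-1,2i\}})$ for $1 \le i \le k$ (indices mod $2k+1$ in $\{1,\dots,2k+1\}$), $w(y_{\{2k+1\}}) + w(y_{\{1,2\}}) < w(y_{\{2\}}) + w(y_{\{2k+1,1\}})$, $w(y_{\{2i\}}) + w(y_{\{2i+1,2i+2\}}) < w(y_{\{2i+2\}}) + w(y_{\{2i,2i+1\}})$ for $1 \le i \le k-1$, and $w(y_{\{2k\}}) + w(y_{\{1,2k+1\}}) < w(y_{\{1\}}) + w(y_{\{2k,2k+1\}})$; indeed, the sum over all left-hand sides equals the sum over all right-hand sides. -/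
import Mathlib


/-- The cycle graph on `Fin n`: `i` adjacent to `i+1` (mod `n`). -/
def cycleGraph (n : ℕ) : SimpleGraph (Fin n) :=
  SimpleGraph.fromRel (fun i j => j.val = (i.val + 1) % n)

/-- A set of vertices is stable (independent) if no two distinct elements are adjacent. -/
def IsStableSet {V : Type*} (G : SimpleGraph V) (s : Set V) : Prop :=
  ∀ ⦃i⦄, i ∈ s → ∀ ⦃j⦄, j ∈ s → i ≠ j → ¬ G.Adj i j

/-- The complement of the odd cycle `C_{2k+1}`. -/
def compC (k : ℕ) : SimpleGraph (Fin (2 * k + 1)) := (cycleGraph (2 * k + 1))ᶜ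

lemma empty_stable (k : ℕ) :
    IsStableSet (compC k) ((∅ : Finset (Fin (2 * k + 1))) : Set (Fin (2 * k + 1))) := by
  intro i hi
  simp at hi

lemma singleton_stable (k : ℕ) (i : Fin (2 * k + 1)) :
    IsStableSet (compC k) (({i} : Finset (Fin (2 * k + 1))) : Set (Fin (2 * k + 1))) := by
  intro a ha b hb hne
  simp only [Finset.coe_singleton, Set.mem_singleton_iff] at ha hb
  exact absurd (ha.trans hb.symm) hne

lemma cycle_adj_succ (k : ℕ) (i : Fin (2 * k + 1)) (h : i ≠ i + 1) :
    (cycleGraph (2 * k + 1)).Adj i (i + 1) := by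
  refine ⟨h, Or.inl ?_⟩
  simp [Fin.add_def]

lemma pair_stable (k : ℕ) (i : Fin (2 * k + 1)) :
    IsStableSet (compC k) (({i, i + 1} : Finset (Fin (2 * k + 1))) : Set (Fin (2 * k + 1))) := by
  intro a ha b hb hne hadj
  simp only [Finset.coe_insert, Finset.coe_singleton, Set.mem_insert_iff,
    Set.mem_singleton_iff] at ha hb
  obtain ⟨-, hnadj⟩ := hadj
  rcases ha with rfl | rfl <;> rcases hb with rfl | rfl
  · exact hne rfl
  · exact hnadj (cycle_adj_succ k a hne)
  · exact hnadj ((cycle_adj_succ k b (Ne.symm hne)).symm)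
  · exact hne rfl

/-- The (index type of) stable sets of the complement of `C_{2k+1}`. -/
def StType (k : ℕ) : Type :=
  {W : Finset (Fin (2 * k + 1)) // IsStableSet (compC k) (↑W : Set (Fin (2 * k + 1)))}

/-- The variable `y_∅`. -/
def yE (k : ℕ) : StType k := ⟨∅, empty_stable k⟩

/-- The variable `y_{i}`. -/
def yS (k : ℕ) (i : Fin (2 * k + 1)) : StType k := ⟨{i}, singleton_stable k i⟩

/-- The variable `y_{i, i+1}` (indices mod `2k+1`). -/
def yP (k : ℕ) (i : Fin (2 * k + 1)) : StType k := ⟨{i, i + 1}, pair_stable k i⟩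

/-- Reduction of a natural number modulo `2k+1`, as an element of `Fin (2k+1)`. -/
def nf (k : ℕ) (i : ℕ) : Fin (2 * k + 1) := ⟨i % (2 * k + 1), Nat.mod_lt _ (by omega)⟩

lemma key_eq (k : ℕ) (hk : 1 ≤ k) (F G : ℕ → ℝ) :
    (∑ i ∈ Finset.Icc 1 k, (F (2 * i - 2) + G (2 * i - 1)))
      + (F (2 * k) + G 0)
      + (∑ i ∈ Finset.Icc 1 (k - 1), (F (2 * i - 1) + G (2 * i)))
      + (F (2 * k - 1) + G (2 * k))
    =
    (∑ i ∈ Finset.Icc 1 k, (F (2 * i) + G (2 * i - 2)))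
      + (F 1 + G (2 * k))
      + (∑ i ∈ Finset.Icc 1 (k - 1), (F (2 * i + 1) + G (2 * i - 1)))
      + (F 0 + G (2 * k - 1)) := by
  obtain ⟨m, rfl⟩ : ∃ m, k = m + 1 := ⟨k - 1, by omega⟩
  have e1 : ∀ H : ℕ → ℝ, ∑ i ∈ Finset.Icc 1 (m + 1), H i
      = ∑ i ∈ Finset.range (m + 1), H (1 + i) := by
    intro H; rw [← Finset.Ico_add_one_right_eq_Icc, Finset.sum_Ico_eq_sum_range]; norm_num
  have e2 : ∀ H : ℕ → ℝ, ∑ i ∈ Finset.Icc 1 (m + 1 - 1), H i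
      = ∑ i ∈ Finset.range m, H (1 + i) := by
    intro H; rw [← Finset.Ico_add_one_right_eq_Icc, Finset.sum_Ico_eq_sum_range]; norm_num
  rw [e1, e1, e2, e2]
  have c1 : ∑ i ∈ Finset.range (m + 1), (F (2 * (1 + i) - 2) + G (2 * (1 + i) - 1))
      = ∑ i ∈ Finset.range (m + 1), (F (2 * i) + G (2 * i + 1)) := by
    refine Finset.sum_congr rfl fun i _ => ?_
    congr 2 <;> omega
  have c2 : ∑ i ∈ Finset.range (m + 1), (F (2 * (1 + i)) + G (2 * (1 + i) - 2))
      = ∑ i ∈ Finset.range (m + 1), (F (2 * i + 2) + G (2 * i)) := by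
    refine Finset.sum_congr rfl fun i _ => ?_
    congr 2 <;> omega
  have c3 : ∑ i ∈ Finset.range m, (F (2 * (1 + i) - 1) + G (2 * (1 + i)))
      = ∑ i ∈ Finset.range m, (F (2 * i + 1) + G (2 * i + 2)) := by
    refine Finset.sum_congr rfl fun i _ => ?_
    congr 2 <;> omega
  have c4 : ∑ i ∈ Finset.range m, (F (2 * (1 + i) + 1) + G (2 * (1 + i) - 1))
      = ∑ i ∈ Finset.range m, (F (2 * i + 3) + G (2 * i + 1)) := by
    refine Finset.sum_congr rfl fun i _ => ?_
    congr 2 <;> omega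
  rw [c1, c2, c3, c4]
  simp only [Finset.sum_add_distrib]
  -- telescoping facts
  have hF1 : ∑ i ∈ Finset.range (m + 1 + 1), F (2 * i)
      = ∑ i ∈ Finset.range (m + 1), F (2 * (i + 1)) + F (2 * 0) :=
    Finset.sum_range_succ' (fun i => F (2 * i)) (m + 1)
  have hF2 : ∑ i ∈ Finset.range (m + 1 + 1), F (2 * i)
      = ∑ i ∈ Finset.range (m + 1), F (2 * i) + F (2 * (m + 1)) :=
    Finset.sum_range_succ (fun i => F (2 * i)) (m + 1)
  have hF3 : ∑ i ∈ Finset.range (m + 1), F (2 * i + 1)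
      = ∑ i ∈ Finset.range m, F (2 * (i + 1) + 1) + F (2 * 0 + 1) :=
    Finset.sum_range_succ' (fun i => F (2 * i + 1)) m
  have hF4 : ∑ i ∈ Finset.range (m + 1), F (2 * i + 1)
      = ∑ i ∈ Finset.range m, F (2 * i + 1) + F (2 * m + 1) :=
    Finset.sum_range_succ (fun i => F (2 * i + 1)) m
  have hG1 : ∑ i ∈ Finset.range (m + 1), G (2 * i)
      = ∑ i ∈ Finset.range m, G (2 * (i + 1)) + G (2 * 0) :=
    Finset.sum_range_succ' (fun i => G (2 * i)) m
  have hG2 : ∑ i ∈ Finset.range (m + 1), G (2 * i + 1)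
      = ∑ i ∈ Finset.range m, G (2 * i + 1) + G (2 * m + 1) :=
    Finset.sum_range_succ (fun i => G (2 * i + 1)) m
  have r1 : ∑ i ∈ Finset.range (m + 1), F (2 * (i + 1))
      = ∑ i ∈ Finset.range (m + 1), F (2 * i + 2) := by
    refine Finset.sum_congr rfl fun i _ => ?_; congr 1 <;> omega
  have r2 : ∑ i ∈ Finset.range m, F (2 * (i + 1) + 1)
      = ∑ i ∈ Finset.range m, F (2 * i + 3) := by
    refine Finset.sum_congr rfl fun i _ => ?_; congr 1 <;> omega
  have r3 : ∑ i ∈ Finset.range m, G (2 * (i + 1))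
      = ∑ i ∈ Finset.range m, G (2 * i + 2) := by
    refine Finset.sum_congr rfl fun i _ => ?_; congr 1 <;> omega
  rw [r1] at hF1
  rw [r2] at hF3
  rw [r3] at hG1
  have b1 : F (2 * m + 1) = F (2 * (m + 1) - 1) := by congr 1 <;> omega
  have b2 : G (2 * m + 1) = G (2 * (m + 1) - 1) := by congr 1 <;> omega
  have b3 : F (2 * m + 2) = F (2 * (m + 1)) := by congr 1 <;> omega
  have b4 : G (2 * m + 2) = G (2 * (m + 1)) := by congr 1 <;> omega
  simp only [Nat.mul_zero, Nat.zero_add] at hF1 hF3 hG1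
  linarith [hF1, hF2, hF3, hF4, hG1, hG2, b1, b2, b3, b4]

/-- The weight-vector formulation of the non-existence of a quadratic Gröbner basis:
no real weight `w` on the variables `y_W` satisfies all the listed strict inequalities,
and indeed the sum of all left-hand sides equals the sum of all right-hand sides.
(Vertex `m ∈ {1, …, 2k+1}` of the paper corresponds to `nf k (m-1)`, and the pair
`{m, m+1}` to `yP k (nf k (m-1))`, with `{1, 2k+1}` being `yP k (nf k (2k))`.) -/
theorem stmt11 (k : ℕ) (hk : 1 ≤ k) :
    (¬ ∃ w : StType k → ℝ,
        (∀ i ∈ Finset.Icc 1 k,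
          w (yS k (nf k (2 * i - 2))) + w (yP k (nf k (2 * i - 1)))
            < w (yS k (nf k (2 * i))) + w (yP k (nf k (2 * i - 2)))) ∧
        (w (yS k (nf k (2 * k))) + w (yP k (nf k 0))
            < w (yS k (nf k 1)) + w (yP k (nf k (2 * k)))) ∧
        (∀ i ∈ Finset.Icc 1 (k - 1),
          w (yS k (nf k (2 * i - 1))) + w (yP k (nf k (2 * i)))
            < w (yS k (nf k (2 * i + 1))) + w (yP k (nf k (2 * i - 1)))) ∧
        (w (yS k (nf k (2 * k - 1))) + w (yP k (nf k (2 * k)))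
            < w (yS k (nf k 0)) + w (yP k (nf k (2 * k - 1))))) ∧
    (∀ w : StType k → ℝ,
        (∑ i ∈ Finset.Icc 1 k,
            (w (yS k (nf k (2 * i - 2))) + w (yP k (nf k (2 * i - 1)))))
          + (w (yS k (nf k (2 * k))) + w (yP k (nf k 0)))
          + (∑ i ∈ Finset.Icc 1 (k - 1),
              (w (yS k (nf k (2 * i - 1))) + w (yP k (nf k (2 * i)))))
          + (w (yS k (nf k (2 * k - 1))) + w (yP k (nf k (2 * k))))
        =
        (∑ i ∈ Finset.Icc 1 k,
            (w (yS k (nf k (2 * i))) + w (yP k (nf k (2 * i - 2)))))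
          + (w (yS k (nf k 1)) + w (yP k (nf k (2 * k))))
          + (∑ i ∈ Finset.Icc 1 (k - 1),
              (w (yS k (nf k (2 * i + 1))) + w (yP k (nf k (2 * i - 1)))))
          + (w (yS k (nf k 0)) + w (yP k (nf k (2 * k - 1))))) := by
  have key := fun (w : StType k → ℝ) =>
    key_eq k hk (fun j => w (yS k (nf k j))) (fun j => w (yP k (nf k j)))
  constructor
  · rintro ⟨w, h1, h2, h3, h4⟩
    have s1 : ∑ i ∈ Finset.Icc 1 k,
        (w (yS k (nf k (2 * i - 2))) + w (yP k (nf k (2 * i - 1))))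
        < ∑ i ∈ Finset.Icc 1 k,
        (w (yS k (nf k (2 * i))) + w (yP k (nf k (2 * i - 2)))) := by
      apply Finset.sum_lt_sum_of_nonempty
      · exact ⟨1, by simp [hk]⟩
      · exact h1
    have s3 : ∑ i ∈ Finset.Icc 1 (k - 1),
        (w (yS k (nf k (2 * i - 1))) + w (yP k (nf k (2 * i))))
        ≤ ∑ i ∈ Finset.Icc 1 (k - 1),
        (w (yS k (nf k (2 * i + 1))) + w (yP k (nf k (2 * i - 1)))) :=
      Finset.sum_le_sum fun i hi => (h3 i hi).le
    have := key w
    linarith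
  · exact key
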